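/- arXiv:0712.3353 — 3 statements merged into one kernel-verified Lean document; each statement's English description precedes it below -/
import Mathlib

section
/- Let x_0, x_1, ..., x_N be a path supported by a dual path p_1, ..., p_{N+1}, i.e., (p_t, E[p_{t+1}|ℱ_t]) ∈ G_t^×(ω) a.s. and p_t·x_{t-1} = 1 a.s. for all t. Define q_t := E[p_{t+1} | ℱ_t] for 0 ≤ t ≤ N. Then q_0, ..., q_N is an R-dual path supporting x_0, ..., x_N: namely, E[q_t·v | ℱ_{t-1}] ≤ q_{t-1}·u a.s. for all (u,v) ∈ Z_t, and q_t·x_t = 1 a.s. -/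
open MeasureTheory Filter Topology

lemma condexp_pi_apply {Ω : Type*} {m mΩ : MeasurableSpace Ω} (hm : m ≤ mΩ)
    (μ : Measure Ω) [IsFiniteMeasure μ] {n : ℕ}
    {p : Ω → Fin n → ℝ} (hp : Integrable p μ) (i : Fin n) :
    (fun ω => (μ[p|m]) ω i) =ᵐ[μ] μ[fun ω => p ω i|m] := by
  set L : (Fin n → ℝ) →L[ℝ] ℝ := ContinuousLinearMap.proj i with hL
  have hpi' : Integrable (fun ω => p ω i) μ := by
    have := L.integrable_comp hp; simpa [hL] using this
  have hqi : Integrable (μ[p|m]) μ := integrable_condExp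
  have hqi' : Integrable (fun ω => (μ[p|m]) ω i) μ := by
    have := L.integrable_comp hqi; simpa [hL] using this
  refine ae_eq_condExp_of_forall_setIntegral_eq hm hpi'
    (fun s _ _ => hqi'.integrableOn) ?_ ?_
  · intro s hs hμs
    have h1 := L.integral_comp_comm (hqi.restrict (s := s))
    have h2 := L.integral_comp_comm (hp.restrict (s := s))
    simp only [hL, ContinuousLinearMap.proj_apply] at h1 h2
    rw [h1, h2, setIntegral_condExp hm hp hs]
  · have hsm : StronglyMeasurable[m] (fun ω => (μ[p|m]) ω i) :=
      ((measurable_pi_apply i).comp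
        (stronglyMeasurable_condExp (f := p)).measurable).stronglyMeasurable
    exact hsm.aestronglyMeasurable

lemma integrable_pi_apply' {Ω : Type*} {mΩ : MeasurableSpace Ω} {μ : Measure Ω} {n : ℕ}
    {g : Ω → Fin n → ℝ} (hg : Integrable g μ) (i : Fin n) :
    Integrable (fun ω => g ω i) μ := by
  have := (ContinuousLinearMap.proj (R := ℝ) (φ := fun _ : Fin n => ℝ) i).integrable_comp hg
  simpa using this

lemma integrable_dot' {Ω : Type*} {m mΩ : MeasurableSpace Ω} (hm : m ≤ mΩ) {μ : Measure Ω}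
    {n : ℕ} {g w : Ω → Fin n → ℝ} (hg : Integrable g μ) (hw : Measurable[m] w)
    (hwb : ∃ C, ∀ ω, ‖w ω‖ ≤ C) :
    Integrable (fun ω => ∑ i, g ω i * w ω i) μ := by
  obtain ⟨C, hC⟩ := hwb
  refine integrable_finset_sum _ fun i _ => ?_
  have h := (integrable_pi_apply' hg i).bdd_mul
    ((((measurable_pi_apply i).comp hw).mono hm le_rfl).aestronglyMeasurable)
    (Filter.Eventually.of_forall fun ω => (norm_le_pi_norm (w ω) i).trans (hC ω))
  exact h.congr (Filter.Eventually.of_forall fun ω => mul_comm _ _)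

lemma condexp_dot' {Ω : Type*} {m mΩ : MeasurableSpace Ω} (hm : m ≤ mΩ)
    (μ : Measure Ω) [IsFiniteMeasure μ] {n : ℕ}
    {g w : Ω → Fin n → ℝ} (hg : Integrable g μ) (hw : Measurable[m] w)
    (hwb : ∃ C, ∀ ω, ‖w ω‖ ≤ C) :
    μ[fun ω => ∑ i, g ω i * w ω i|m] =ᵐ[μ] fun ω => ∑ i, (μ[g|m]) ω i * w ω i := by
  have hgi : ∀ i, Integrable (fun ω => g ω i) μ := fun i => integrable_pi_apply' hg i
  have hwsm : ∀ i, StronglyMeasurable[m] (fun ω => w ω i) := fun i =>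
    ((measurable_pi_apply i).comp hw).stronglyMeasurable
  obtain ⟨C, hC⟩ := hwb
  have hint : ∀ i, Integrable (fun ω => w ω i * g ω i) μ := fun i =>
    (hgi i).bdd_mul (((hwsm i).mono hm).aestronglyMeasurable)
      (Filter.Eventually.of_forall fun ω => (norm_le_pi_norm (w ω) i).trans (hC ω))
  have h3 : ∀ i, μ[fun ω => w ω i * g ω i|m] =ᵐ[μ] fun ω => (μ[g|m]) ω i * w ω i := by
    intro i
    have ha : μ[fun ω => w ω i * g ω i|m]
        =ᵐ[μ] fun ω => w ω i * (μ[fun ω' => g ω' i|m]) ω :=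
      condExp_mul_of_stronglyMeasurable_left (hwsm i) (hint i) (hgi i)
    have hb := condexp_pi_apply hm μ hg i
    filter_upwards [ha, hb] with ω h1 h2
    rw [h1, ← h2, mul_comm]
  have hfun : (fun ω => ∑ i, g ω i * w ω i) = ∑ i : Fin n, fun ω => w ω i * g ω i := by
    funext ω
    simp only [Finset.sum_apply]
    exact Finset.sum_congr rfl fun i _ => mul_comm _ _
  rw [hfun]
  refine (condExp_finset_sum (fun i _ => hint i) m).trans ?_
  filter_upwards [ae_all_iff.2 h3] with ω hω
  simp only [Finset.sum_apply]
  exact Finset.sum_congr rfl fun i _ => hω i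

/-- 'If' direction of Theorem 2: if a path is supported by a (Dynkin) dual path,
then q_t := E[p_{t+1}|F_t] is an R-dual path supporting it. -/
theorem stmt6 {Ω : Type*} {mΩ : MeasurableSpace Ω} (μ : Measure Ω) [IsProbabilityMeasure μ]
    (F : ℕ → MeasurableSpace Ω) (hFmono : Monotone F) (hFle : ∀ t, F t ≤ mΩ)
    (n N : ℕ) (G : ℕ → Ω → Set ((Fin n → ℝ) × (Fin n → ℝ)))
    (x p : ℕ → Ω → Fin n → ℝ)
    (hxm : ∀ t, Measurable[F t] (x t)) (hxb : ∀ t, ∃ C, ∀ ω, ‖x t ω‖ ≤ C)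
    (hxn : ∀ t ω i, 0 ≤ x t ω i)
    (hpm : ∀ t, Measurable[F t] (p t)) (hpi : ∀ t, Integrable (p t) μ)
    (hpn : ∀ t ω i, 0 ≤ p t ω i)
    (hpath : ∀ t, 1 ≤ t → t ≤ N → ∀ᵐ ω ∂μ, (x (t - 1) ω, x t ω) ∈ G t ω)
    (hdual : ∀ t, 1 ≤ t → t ≤ N → ∀ᵐ ω ∂μ, ∀ ab ∈ G t ω,
        ∑ i, (μ[p (t + 1) | F t]) ω i * ab.2 i ≤ ∑ i, p t ω i * ab.1 i)
    (hsupp : ∀ t, 1 ≤ t → t ≤ N + 1 → ∀ᵐ ω ∂μ, ∑ i, p t ω i * x (t - 1) ω i = 1) :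
    (∀ t, 1 ≤ t → t ≤ N →
      ∀ u v : Ω → Fin n → ℝ, Measurable[F (t - 1)] u → Measurable[F t] v →
        (∃ C, ∀ ω, ‖u ω‖ ≤ C) → (∃ C, ∀ ω, ‖v ω‖ ≤ C) →
        (∀ ω i, 0 ≤ u ω i) → (∀ ω i, 0 ≤ v ω i) →
        (∀ᵐ ω ∂μ, (u ω, v ω) ∈ G t ω) →
        (μ[fun ω => ∑ i, (μ[p (t + 1) | F t]) ω i * v ω i | F (t - 1)] ≤ᵐ[μ]
          fun ω => ∑ i, (μ[p t | F (t - 1)]) ω i * u ω i)) ∧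
    (∀ t, t ≤ N → ∀ᵐ ω ∂μ, ∑ i, (μ[p (t + 1) | F t]) ω i * x t ω i = 1) := by
  constructor
  · intro t ht1 htN u v hum hvm hub hvb _hun _hvn hGuv
    have step1 : (fun ω => ∑ i, (μ[p (t + 1) | F t]) ω i * v ω i)
        ≤ᵐ[μ] fun ω => ∑ i, p t ω i * u ω i := by
      filter_upwards [hdual t ht1 htN, hGuv] with ω h1 h2 using h1 (u ω, v ω) h2
    have hintL : Integrable (fun ω => ∑ i, (μ[p (t + 1) | F t]) ω i * v ω i) μ :=
      integrable_dot' (hFle t) integrable_condExp hvm hvb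
    have hintR : Integrable (fun ω => ∑ i, p t ω i * u ω i) μ :=
      integrable_dot' (hFle (t - 1)) (hpi t) hum hub
    have hmono := condExp_mono (m := F (t - 1)) hintL hintR step1
    have hkey := condexp_dot' (hFle (t - 1)) μ (hpi t) hum hub
    exact hmono.trans hkey.le
  · intro t htN
    have hs := hsupp (t + 1) (by omega) (by omega)
    simp only [Nat.add_sub_cancel] at hs
    have hdot := condexp_dot' (hFle t) μ (hpi (t + 1)) (hxm t) (hxb t)
    have hone : μ[fun ω => ∑ i, p (t + 1) ω i * x t ω i|F t] =ᵐ[μ] fun _ => (1 : ℝ) := by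
      refine (condExp_congr_ae (m := F t) hs).trans ?_
      rw [condExp_const (hFle t) (1 : ℝ)]
    filter_upwards [hdot.symm.trans hone] with ω hω using hω
end

section
/- Let D_1, D_2 be Banach spaces, W ⊆ D_1 convex, F : W → ℝ concave, and B : D_1 → D_2 a continuous linear operator whose image H = B(D_1) is closed in D_2. Suppose F attains its maximum over {w ∈ W : Bw = 0} at w̄ ∈ W, and suppose there is a subset W̃ ⊆ W on which F is bounded below and such that B(W̃) contains a neighborhood of 0 in H. Then there exists a continuous linear functional π on D_2 such that F(w) + π(Bw) ≤ F(w̄) for all w ∈ W. -/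
set_option maxHeartbeats 1000000


/-- Proposition A.4: Kuhn–Tucker theorem for concave maximization under a linear
equality constraint in Banach spaces. -/
theorem stmt14 {D1 D2 : Type*}
    [NormedAddCommGroup D1] [NormedSpace ℝ D1] [CompleteSpace D1]
    [NormedAddCommGroup D2] [NormedSpace ℝ D2] [CompleteSpace D2]
    (W : Set D1) (hW : Convex ℝ W) (F : D1 → ℝ) (hF : ConcaveOn ℝ W F)
    (B : D1 →L[ℝ] D2) (hH : IsClosed (Set.range B))
    (wbar : D1) (hwbar : wbar ∈ W) (hBwbar : B wbar = 0)
    (hmax : ∀ w ∈ W, B w = 0 → F w ≤ F wbar)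
    (Wt : Set D1) (hWt : Wt ⊆ W) (hbdd : BddBelow (F '' Wt))
    (hnbhd : ∃ ε > 0, ∀ y ∈ Set.range B, ‖y‖ < ε → y ∈ B '' Wt) :
    ∃ π : D2 →L[ℝ] ℝ, ∀ w ∈ W, F w + π (B w) ≤ F wbar := by
  obtain ⟨ε, hε, hball⟩ := hnbhd
  obtain ⟨m, hm⟩ := hbdd
  set p : Submodule ℝ D2 := LinearMap.range (B : D1 →ₗ[ℝ] D2) with hp
  set B' : D1 →L[ℝ] ↥p := B.codRestrict p (fun x => LinearMap.mem_range_self _ x) with hB'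
  -- the convex set
  set C : Set (↥p × ℝ) := {q | ∃ w ∈ W, B' w = q.1 ∧ q.2 < F w - F wbar} with hC
  have hB'coe : ∀ w : D1, ((B' w : D2)) = B w := fun w => rfl
  have hCconv : Convex ℝ C := by
    rintro q1 ⟨w1, hw1, hb1, hr1⟩ q2 ⟨w2, hw2, hb2, hr2⟩ a b ha hb hab
    rcases ha.eq_or_lt with rfl | ha'
    · have hb1' : b = 1 := by linarith
      subst hb1'
      simpa using ⟨w2, hw2, hb2, hr2⟩
    rcases hb.eq_or_lt with rfl | hb'
    · have ha1' : a = 1 := by linarith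
      subst ha1'
      simpa using ⟨w1, hw1, hb1, hr1⟩
    refine ⟨a • w1 + b • w2, hW hw1 hw2 ha hb hab, ?_, ?_⟩
    · simp [map_add, map_smul, hb1, hb2, Prod.smul_fst, Prod.fst_add]
    · have hconc := hF.2 hw1 hw2 ha hb hab
      simp only [smul_eq_mul] at hconc
      have : (a • q1 + b • q2).2 = a * q1.2 + b * q2.2 := rfl
      rw [this]
      have habF : a * F wbar + b * F wbar = F wbar := by rw [← add_mul, hab, one_mul]
      nlinarith [mul_lt_mul_of_pos_left hr1 ha', mul_lt_mul_of_pos_left hr2 hb']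
  -- the open set inside C
  set U : Set (↥p × ℝ) := Metric.ball (0 : ↥p) ε ×ˢ Set.Iio (m - F wbar - 1) with hU
  have hUopen : IsOpen U := (Metric.isOpen_ball).prod isOpen_Iio
  have hUC : U ⊆ C := by
    rintro ⟨y, r⟩ ⟨hy, hr⟩
    have hynorm : ‖(y : D2)‖ < ε := by
      rwa [mem_ball_zero_iff] at hy
    have hyr : (y : D2) ∈ Set.range ⇑B := y.2
    obtain ⟨w, hwWt, hBw⟩ := hball _ hyr hynorm
    refine ⟨w, hWt hwWt, ?_, ?_⟩
    · exact Subtype.ext hBw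
    · have : m ≤ F w := hm ⟨w, hwWt, rfl⟩
      simp only [Set.mem_Iio] at hr
      simp only []
      linarith
  have hzero : ((0 : ↥p), (0 : ℝ)) ∉ C := by
    rintro ⟨w, hw, hbw, hrw⟩
    have : B w = 0 := by
      rw [← hB'coe w, hbw]; simp
    have := hmax w hw this
    simp at hrw
    linarith
  obtain ⟨f, hf⟩ := geometric_hahn_banach_open_point (hCconv.interior) isOpen_interior
    (fun h => hzero (interior_subset h))
  rw [show (((0:↥p),(0:ℝ))) = (0 : ↥p × ℝ) from rfl, map_zero] at hf
  -- f ≤ 0 on C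
  have hu0 : ((0 : ↥p), (m - F wbar - 1 - 1 : ℝ)) ∈ U := by
    constructor
    · simpa using hε
    · simp only [Set.mem_Iio]; linarith
  have huint : ((0 : ↥p), (m - F wbar - 1 - 1 : ℝ)) ∈ interior C :=
    interior_maximal hUC hUopen hu0
  have hfC : ∀ c ∈ C, f c ≤ 0 := by
    intro c hc
    set u := ((0 : ↥p), (m - F wbar - 1 - 1 : ℝ)) with hu
    have hseq : ∀ n : ℕ, f ((1 / ((n : ℝ) + 1)) • u + (1 - 1 / ((n : ℝ) + 1)) • c) < 0 := by
      intro n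
      have hn : (0 : ℝ) < 1 / ((n : ℝ) + 1) := by positivity
      have hn1 : (1 : ℝ) / ((n : ℝ) + 1) ≤ 1 := by
        rw [div_le_one (by positivity)]; linarith [Nat.cast_nonneg (α := ℝ) n]
      exact hf _ (hCconv.combo_interior_closure_mem_interior huint (subset_closure hc)
        hn (by linarith) (by ring))
    have hval : ∀ n : ℕ, f ((1 / ((n : ℝ) + 1)) • u + (1 - 1 / ((n : ℝ) + 1)) • c)
        = (1 / ((n : ℝ) + 1)) * f u + (1 - 1 / ((n : ℝ) + 1)) * f c := by
      intro n
      rw [map_add, map_smul, map_smul]; rfl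
    have htend : Filter.Tendsto
        (fun n : ℕ => (1 / ((n : ℝ) + 1)) * f u + (1 - 1 / ((n : ℝ) + 1)) * f c)
        Filter.atTop (nhds (f c)) := by
      have h0 : Filter.Tendsto (fun n : ℕ => 1 / ((n : ℝ) + 1)) Filter.atTop (nhds 0) :=
        tendsto_one_div_add_atTop_nhds_zero_nat
      have := ((h0.mul_const (f u)).add (((tendsto_const_nhds (x := (1:ℝ))).sub h0).mul_const
        (f c)))
      simpa using this
    refine le_of_tendsto' htend fun n => ?_
    rw [← hval n]
    exact (hseq n).le
  -- decompose f
  set a : ℝ := f ((0 : ↥p), (1 : ℝ)) with ha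
  set f₁ : ↥p →L[ℝ] ℝ := f.comp (ContinuousLinearMap.inl ℝ ↥p ℝ) with hf₁
  have hdec : ∀ (y : ↥p) (r : ℝ), f (y, r) = f₁ y + r * a := by
    intro y r
    have h1 : (y, r) = ((y, 0) : ↥p × ℝ) + r • ((0 : ↥p), (1 : ℝ)) := by
      ext <;> simp
    rw [h1, map_add, map_smul]
    rfl
  -- a ≥ 0
  have hCm1 : (((0 : ↥p), (-1 : ℝ))) ∈ C := by
    refine ⟨wbar, hwbar, ?_, by simp⟩
    exact Subtype.ext (by rw [hB'coe, hBwbar]; simp)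
  have ha0 : 0 ≤ a := by
    have := hfC _ hCm1
    rw [hdec] at this
    simp only [map_zero] at this
    linarith
  -- a ≠ 0
  have hapos : 0 < a := by
    rcases ha0.eq_or_lt with h | h
    · exfalso
      have hflt := hf _ huint
      rw [hdec, map_zero, ← h] at hflt
      simp at hflt
    · exact h
  -- extend
  obtain ⟨g, hg, _⟩ := exists_extension_norm_eq p (a⁻¹ • f₁)
  refine ⟨g, fun w hw => ?_⟩
  have hgBw : g (B w) = a⁻¹ * f₁ (B' w) := by
    have := hg (B' w)
    rw [hB'coe] at this
    rw [this]
    rfl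
  have key : f₁ (B' w) + a * (F w - F wbar) ≤ 0 := by
    refine le_of_forall_pos_le_add fun δ hδ => ?_
    have hr : (B' w, F w - F wbar - δ / a) ∈ C :=
      ⟨w, hw, rfl, by have := div_pos hδ hapos; linarith⟩
    have := hfC _ hr
    rw [hdec] at this
    have hda : a * (δ / a) = δ := by field_simp
    nlinarith
  rw [hgBw]
  have h1 : a⁻¹ * f₁ (B' w) ≤ F wbar - F w := by
    rw [← mul_le_mul_iff_right₀ hapos]
    have haa : a * (a⁻¹ * f₁ (B' w)) = f₁ (B' w) := by field_simp
    rw [haa]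
    nlinarith
  linarith
end

section
/- Let f(ω, x) be a jointly measurable real-valued function of ω ∈ Ω and x ∈ ℝ^n, and G(ω) ⊆ ℝ^n a nonempty closed set depending measurably on ω, such that |f(ω,x)| ≤ K(ω) for x ∈ G(ω) with EK < ∞. Let ξ̄ be a measurable function with ξ̄(ω) ∈ G(ω) a.s. Then the following are equivalent: (i) E f(ω, ξ(ω)) ≤ E f(ω, ξ̄(ω)) for every measurable ξ with ξ(ω) ∈ G(ω) a.s.; (ii) f(ω, ξ̄(ω)) = sup_{x ∈ G(ω)} f(ω, x) for almost every ω. -/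
open MeasureTheory
open Set Filter Topology


/-- Any set in a product σ-algebra factors through a measurable map to `ℕ → ℕ`. -/
theorem factor_lemma {Ω X : Type*} [mΩ : MeasurableSpace Ω] [mX : MeasurableSpace X]
    {S : Set (Ω × X)} (hS : MeasurableSet S) :
    ∃ (φ : Ω → (ℕ → ℕ)), Measurable φ ∧ ∃ S' : Set ((ℕ → ℕ) × X), MeasurableSet S' ∧
      S = (fun p : Ω × X => (φ p.1, p.2)) ⁻¹' S' := by
  set 𝒞 : Set (Set (Ω × X)) := {T | ∃ (φ : Ω → (ℕ → ℕ)), Measurable φ ∧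
    ∃ T' : Set ((ℕ → ℕ) × X), MeasurableSet T' ∧ T = (fun p : Ω × X => (φ p.1, p.2)) ⁻¹' T'} with h𝒞
  have hempty : ∅ ∈ 𝒞 := ⟨fun _ _ => 0, measurable_const, ∅, MeasurableSet.empty, by simp⟩
  have hcompl : ∀ T ∈ 𝒞, Tᶜ ∈ 𝒞 := by
    rintro T ⟨φ, hφ, T', hT', rfl⟩
    exact ⟨φ, hφ, T'ᶜ, hT'.compl, rfl⟩
  have hunion : ∀ T : ℕ → Set (Ω × X), (∀ m, T m ∈ 𝒞) → (⋃ m, T m) ∈ 𝒞 := by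
    intro T hT
    choose φ hφ T' hT' hTeq using hT
    set e : ℕ × ℕ ≃ ℕ := Nat.pairEquiv with he
    set Φ : Ω → ℕ → ℕ := fun ω n => φ (e.symm n).1 ω (e.symm n).2 with hΦdef
    have hΦ : Measurable Φ := by
      apply measurable_pi_lambda
      intro n
      exact (measurable_pi_apply _).comp (hφ _)
    set π : ℕ → (ℕ → ℕ) → (ℕ → ℕ) := fun m z i => z (e (m, i)) with hπdef
    have hπ : ∀ m, Measurable (π m) := by
      intro m
      apply measurable_pi_lambda
      intro i
      exact measurable_pi_apply _
    have hπΦ : ∀ m ω, π m (Φ ω) = φ m ω := by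
      intro m ω
      funext i
      simp [hπdef, hΦdef, he]
    refine ⟨Φ, hΦ, ⋃ m, (fun p : (ℕ → ℕ) × X => (π m p.1, p.2)) ⁻¹' T' m, ?_, ?_⟩
    · exact MeasurableSet.iUnion fun m => ((hπ m).comp measurable_fst).prodMk measurable_snd (hT' m)
    · ext p
      simp only [mem_iUnion, mem_preimage, hπΦ]
      constructor
      · rintro ⟨m, hm⟩
        rw [hTeq m] at hm
        exact ⟨m, by simpa [hπΦ] using hm⟩
      · rintro ⟨m, hm⟩
        refine ⟨m, ?_⟩
        rw [hTeq m]
        simpa [hπΦ] using hm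
  have hle : (Prod.instMeasurableSpace : MeasurableSpace (Ω × X)) ≤
      MeasurableSpace.mk (fun T => T ∈ 𝒞) hempty hcompl hunion := by
    rw [show (Prod.instMeasurableSpace : MeasurableSpace (Ω × X)) = MeasurableSpace.comap Prod.fst mΩ ⊔ MeasurableSpace.comap Prod.snd mX from rfl]
    apply sup_le
    · intro T hT
      rcases hT with ⟨B, hB, rfl⟩
      refine ⟨fun ω _ => B.indicator (fun _ => 1) ω, ?_, {p | p.1 0 = 1}, ?_, ?_⟩
      · apply measurable_pi_lambda
        intro _
        exact measurable_const.indicator hB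
      · exact (measurable_pi_apply 0).comp measurable_fst (MeasurableSet.singleton 1)
      · ext p
        by_cases h : p.1 ∈ B <;> simp [Set.indicator, h]
      
    · intro T hT
      rcases hT with ⟨C, hC, rfl⟩
      exact ⟨fun _ _ => 0, measurable_const, {p | p.2 ∈ C}, measurable_snd hC, rfl⟩
  exact hle S hS


/-- Measurable selection for images of compact sets under continuous maps from Baire space. -/
theorem compact_selection {Z : Type*} [MeasurableSpace Z] [TopologicalSpace Z] [T2Space Z]
    [OpensMeasurableSpace Z] {p : (ℕ → ℕ) → Z} (hp : Continuous p) {K : Set (ℕ → ℕ)}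
    (hK : IsCompact K) :
    ∃ σ : Z → (ℕ → ℕ), Measurable σ ∧ ∀ z ∈ p '' K, σ z ∈ K ∧ p (σ z) = z := by
  classical
  set C : ℕ → Z → Set (ℕ → ℕ) := fun m z =>
    Nat.rec (K ∩ p ⁻¹' {z}) (fun m Cm => {x ∈ Cm | x m = sInf ((fun x => x m) '' Cm)}) m with hC
  set mu : ℕ → Z → ℕ := fun m z => sInf ((fun x => x m) '' C m z) with hmu
  have hCsucc : ∀ m z, C (m + 1) z = {x ∈ C m z | x m = mu m z} := fun m z => rfl
  have hCstruct : ∀ m z, C m z = K ∩ p ⁻¹' {z} ∩ {x | ∀ i, i < m → x i = mu i z} := by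
    intro m z
    induction m with
    | zero => simp [hC]
    | succ m ih =>
      rw [hCsucc, ih]
      ext x
      simp only [mem_inter_iff, mem_setOf_eq, mem_preimage, mem_singleton_iff]
      constructor
      · rintro ⟨⟨⟨hxK, hpx⟩, hprev⟩, hm⟩
        refine ⟨⟨hxK, hpx⟩, fun i hi => ?_⟩
        rcases Nat.lt_succ_iff_lt_or_eq.1 hi with h | rfl
        · exact hprev i h
        · exact hm
      · rintro ⟨⟨hxK, hpx⟩, hall⟩
        exact ⟨⟨⟨hxK, hpx⟩, fun i hi => hall i (hi.trans (Nat.lt_succ_self m))⟩,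
          hall m (Nat.lt_succ_self m)⟩
  have hCclosed : ∀ m z, IsClosed (C m z) := by
    intro m z
    rw [hCstruct]
    refine ((hK.isClosed.inter (IsClosed.preimage hp isClosed_singleton))).inter ?_
    have : {x : ℕ → ℕ | ∀ i, i < m → x i = mu i z} = ⋂ (i : ℕ) (_ : i < m), {x | x i = mu i z} := by
      ext x; simp
    rw [this]
    exact isClosed_iInter fun i => isClosed_iInter fun _ =>
      IsClosed.preimage (continuous_apply i) isClosed_singleton
  have hCsubK : ∀ m z, C m z ⊆ K ∩ p ⁻¹' {z} := by
    intro m z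
    rw [hCstruct]
    exact inter_subset_left
  have hCne : ∀ z ∈ p '' K, ∀ m, (C m z).Nonempty := by
    rintro z ⟨x, hxK, rfl⟩ m
    induction m with
    | zero => exact ⟨x, hxK, rfl⟩
    | succ m ih =>
      obtain ⟨y, hy, hym⟩ : ∃ y ∈ C m (p x), y m = mu m (p x) := by
        have : mu m (p x) ∈ (fun x => x m) '' C m (p x) := Nat.sInf_mem (ih.image _)
        rcases this with ⟨y, hy, hym⟩
        exact ⟨y, hy, hym⟩
      exact ⟨y, hy, hym⟩
  -- the selection
  set σ : Z → ℕ → ℕ := fun z m => mu m z with hσ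
  have hσspec : ∀ z ∈ p '' K, σ z ∈ K ∧ p (σ z) = z := by
    intro z hz
    obtain ⟨x, hx⟩ : (⋂ m, C m z).Nonempty := by
      apply IsCompact.nonempty_iInter_of_sequence_nonempty_isCompact_isClosed
      · intro m
        rw [hCsucc]
        exact fun x hx => hx.1
      · exact fun m => hCne z hz m
      · exact (hK.inter_right (IsClosed.preimage hp isClosed_singleton)).of_isClosed_subset
          (hCclosed 0 z) (hCsubK 0 z)
      · exact fun m => hCclosed m z
    have hxeq : x = σ z := by
      funext m
      have : x ∈ C (m + 1) z := mem_iInter.1 hx (m + 1)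
      rw [hCsucc] at this
      exact this.2
    have hx0 : x ∈ C 0 z := mem_iInter.1 hx 0
    rcases hCsubK 0 z hx0 with ⟨hxK, hpx⟩
    rw [hxeq] at hxK hpx
    exact ⟨hxK, hpx⟩
  -- measurability
  have hpK : MeasurableSet (p '' K) := (hK.image hp).isClosed.measurableSet
  have hCempty : ∀ z, z ∉ p '' K → ∀ m, C m z = ∅ := by
    intro z hz m
    have h0 : C 0 z = ∅ := by
      rw [eq_empty_iff_forall_notMem]
      rintro x ⟨hxK, hpx⟩
      exact hz ⟨x, hxK, hpx⟩
    have := hCsubK m z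
    rw [show K ∩ p ⁻¹' {z} = C 0 z from rfl, h0] at this
    exact eq_empty_iff_forall_notMem.2 fun x hx => (this hx).elim
  have hmu_out : ∀ z, z ∉ p '' K → ∀ m, mu m z = 0 := by
    intro z hz m
    rw [hmu]
    simp [hCempty z hz m, Nat.sInf_empty]
  -- the key measurable sets
  have hAmeas : ∀ (m : ℕ) (t : ℕ → ℕ),
      MeasurableSet {z | z ∈ p '' K ∧ ∀ i, i < m → mu i z = t i} := by
    intro m t
    have hKPc : ∀ (m' : ℕ) (W : Set (ℕ → ℕ)), IsClosed W →
        MeasurableSet (p '' (K ∩ {x | ∀ i, i < m' → x i = t i} ∩ W)) := by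
      intro m' W hW
      have hclosed : IsClosed ({x : ℕ → ℕ | ∀ i, i < m' → x i = t i} ∩ W) := by
        refine IsClosed.inter ?_ hW
        have : {x : ℕ → ℕ | ∀ i, i < m' → x i = t i}
            = ⋂ (i : ℕ) (_ : i < m'), {x | x i = t i} := by ext x; simp
        rw [this]
        exact isClosed_iInter fun i => isClosed_iInter fun _ =>
          IsClosed.preimage (continuous_apply i) isClosed_singleton
      rw [inter_assoc]
      exact (((hK.inter_right hclosed).image hp).isClosed).measurableSet
    have key : {z | z ∈ p '' K ∧ ∀ i, i < m → mu i z = t i} =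
        p '' (K ∩ {x | ∀ i, i < m → x i = t i} ∩ univ) \
          ⋃ (i : ℕ) (_ : i < m) (j : ℕ) (_ : j < t i),
            p '' (K ∩ {x | ∀ i', i' < i → x i' = t i'} ∩ {x | x i = j}) := by
      ext z
      simp only [mem_setOf_eq, mem_diff, mem_iUnion, inter_univ, not_exists]
      constructor
      · rintro ⟨hzpK, hmu_eq⟩
        constructor
        · obtain ⟨x, hx⟩ := hCne z hzpK m
          rw [hCstruct] at hx
          rcases hx with ⟨⟨hxK, hpx⟩, hxi⟩
          exact ⟨x, ⟨hxK, fun i hi => (hxi i hi).trans (hmu_eq i hi)⟩, hpx⟩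
        · rintro i hi j hj ⟨x, ⟨⟨hxK, hxi⟩, hxij⟩, hpx⟩
          have hxCi : x ∈ C i z := by
            rw [hCstruct]
            exact ⟨⟨hxK, hpx⟩, fun i' hi' => (hxi i' hi').trans
              (hmu_eq i' (hi'.trans hi)).symm⟩
          have : mu i z ≤ x i := Nat.sInf_le (Set.mem_image_of_mem (fun x => x i) hxCi)
          rw [hxij] at this
          rw [hmu_eq i hi] at this
          exact absurd hj (not_lt.2 this)
      · rintro ⟨⟨x, ⟨hxK, hxi⟩, hpx⟩, hnot⟩
        have hzpK : z ∈ p '' K := ⟨x, hxK, hpx⟩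
        refine ⟨hzpK, ?_⟩
        intro i hi
        induction i using Nat.strong_induction_on with
        | _ i ih =>
          have hprev : ∀ i', i' < i → mu i' z = t i' := fun i' hi' => ih i' hi' (hi'.trans hi)
          have hxCi : x ∈ C i z := by
            rw [hCstruct]
            exact ⟨⟨hxK, hpx⟩, fun i' hi' => (hxi i' (hi'.trans hi)).trans (hprev i' hi').symm⟩
          have hle : mu i z ≤ t i := by
            have h2 : mu i z ≤ x i := Nat.sInf_le (Set.mem_image_of_mem (fun x => x i) hxCi)
            rw [hxi i hi] at h2
            exact h2
          rcases lt_or_eq_of_le hle with hlt | heq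
          · exfalso
            obtain ⟨y, hy⟩ := hCne z hzpK (i + 1)
            rw [hCstruct (i + 1) z] at hy
            rcases hy with ⟨⟨hyK, hpy⟩, hyi⟩
            exact hnot i hi (mu i z) hlt
              ⟨y, ⟨⟨hyK, fun i' hi' => (hyi i' (hi'.trans (Nat.lt_succ_self i))).trans
                (hprev i' hi')⟩, hyi i (Nat.lt_succ_self i)⟩, hpy⟩
          · exact heq
    rw [key]
    refine MeasurableSet.diff (hKPc m univ isClosed_univ) ?_
    exact MeasurableSet.iUnion fun i => MeasurableSet.iUnion fun _ =>
      MeasurableSet.iUnion fun j => MeasurableSet.iUnion fun _ => hKPc i _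
        (IsClosed.preimage (continuous_apply i) isClosed_singleton)
  have hmum : ∀ m, Measurable fun z => mu m z := by
    intro m
    apply measurable_to_countable'
    intro j
    have : (fun z => mu m z) ⁻¹' {j} =
        (⋃ (t : Fin m → ℕ), {z | z ∈ p '' K ∧ ∀ i, i < m + 1 →
          mu i z = (fun i' => if h : i' < m then t ⟨i', h⟩ else j) i}) ∪
        (if j = 0 then (p '' K)ᶜ else ∅) := by
      ext z
      by_cases hz : z ∈ p '' K
      · simp only [mem_preimage, mem_singleton_iff, mem_union, mem_iUnion, mem_setOf_eq]
        constructor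
        · intro hmz
          refine Or.inl ⟨fun i => mu i z, hz, fun i hi => ?_⟩
          by_cases h : i < m
          · simp [h]
          · have : i = m := by omega
            subst this
            simp [hmz]
        · rintro (⟨t, _, hall⟩ | hbad)
          · have := hall m (Nat.lt_succ_self m)
            simpa using this
          · by_cases hj : j = 0
            · rw [if_pos hj] at hbad
              exact absurd hz hbad
            · rw [if_neg hj] at hbad
              exact hbad.elim
      · simp only [mem_preimage, mem_singleton_iff, mem_union, mem_iUnion, mem_setOf_eq,
          hmu_out z hz]
        constructor
        · intro h
          right
          simp [← h, hz]
        · rintro (⟨t, ht, _⟩ | hbad)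
          · exact absurd ht hz
          · by_cases hj : j = 0
            · exact hj.symm
            · simp [hj] at hbad
    rw [this]
    refine MeasurableSet.union (MeasurableSet.iUnion fun t => hAmeas (m + 1) _) ?_
    by_cases hj : j = 0 <;> simp [hj, hpK.compl]
  refine ⟨σ, ?_, hσspec⟩
  exact measurable_pi_lambda σ fun m => hmum m

/-- Von Neumann-type measurable selection on a non-null part of the projection. -/
theorem vonNeumann_selection {X : Type*} [MeasurableSpace X] [TopologicalSpace X]
    [PolishSpace X] [BorelSpace X] (ν : Measure (ℕ → ℕ)) [IsFiniteMeasure ν]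
    {S' : Set ((ℕ → ℕ) × X)} (hS' : MeasurableSet S') (hpos : ν (Prod.fst '' S') ≠ 0) :
    ∃ B : Set (ℕ → ℕ), MeasurableSet B ∧ ν B ≠ 0 ∧
      ∃ σ : (ℕ → ℕ) → X, Measurable σ ∧ ∀ z ∈ B, (z, σ z) ∈ S' := by
  classical
  have hA : AnalyticSet S' := hS'.analyticSet
  rw [MeasureTheory.AnalyticSet_def] at hA
  rcases hA with rfl | ⟨h, hcont, hrange⟩
  · simp at hpos
  set p : (ℕ → ℕ) → (ℕ → ℕ) := fun a => (h a).1 with hpdef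
  set q : (ℕ → ℕ) → X := fun a => (h a).2 with hqdef
  have hp : Continuous p := (continuous_fst.comp hcont)
  have hq : Continuous q := (continuous_snd.comp hcont)
  have hr : Prod.fst '' S' = Set.range p := by
    rw [← hrange, ← Set.range_comp]
    rfl
  set c : ENNReal := ν (Set.range p) with hc
  have hc0 : c ≠ 0 := by rw [hc, ← hr]; exact hpos
  have hctop : c ≠ ⊤ := measure_ne_top ν _
  have hhalf : c / 2 < c := ENNReal.half_lt_self hc0 hctop
  -- the predicate
  set D : ℕ → (ℕ → ℕ) → Set (ℕ → ℕ) := fun m k => {x | ∀ i, i < m → x i ≤ k i} with hD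
  set good : (ℕ → ℕ) → ℕ → Prop := fun k m => c / 2 < ν (p '' D m k) with hgood
  have hstep : ∀ (k : ℕ → ℕ) (m : ℕ), good k m → ∃ j, good (Function.update k m j) (m + 1) := by
    intro k m hg
    have hEeq : ∀ j : ℕ, D (m + 1) (Function.update k m j) = D m k ∩ {x | x m ≤ j} := by
      intro j
      ext x
      simp only [hD, mem_setOf_eq, mem_inter_iff]
      constructor
      · intro hx
        refine ⟨fun i hi => ?_, ?_⟩
        · have := hx i (hi.trans (Nat.lt_succ_self m))
          rwa [Function.update_of_ne hi.ne] at this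
        · have := hx m (Nat.lt_succ_self m)
          rwa [Function.update_self] at this
      · rintro ⟨h1, h2⟩ i hi
        rcases Nat.lt_succ_iff_lt_or_eq.1 hi with hi' | rfl
        · rw [Function.update_of_ne hi'.ne]
          exact h1 i hi'
        · rw [Function.update_self]
          exact h2
    have hmono : Monotone fun j => p '' (D m k ∩ {x | x m ≤ j}) := by
      intro j j' hj
      apply image_mono
      exact inter_subset_inter_right _ (fun x hx => le_trans hx hj)
    have hcup : ⋃ j, (D m k ∩ {x | x m ≤ j}) = D m k := by
      ext x
      simp only [mem_iUnion, mem_inter_iff, mem_setOf_eq]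
      exact ⟨fun ⟨j, hj, _⟩ => hj, fun hx => ⟨x m, hx, le_refl _⟩⟩
    have hsup : ν (p '' D m k) = ⨆ j, ν (p '' (D m k ∩ {x | x m ≤ j})) := by
      conv_lhs => rw [← hcup, image_iUnion]
      exact (hmono.directed_le).measure_iUnion
    rw [hgood] at hg
    rw [hsup] at hg
    rcases lt_iSup_iff.1 hg with ⟨j, hj⟩
    refine ⟨j, ?_⟩
    show c / 2 < ν (p '' D (m + 1) (Function.update k m j))
    rw [hEeq]
    exact hj
  -- recursively constructed bounds
  set Kfun : ℕ → (ℕ → ℕ) := fun m => Nat.rec (fun _ => 0)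
    (fun m km => if hg : good km m then Function.update km m (hstep km m hg).choose else km) m
    with hKfun
  have hKsucc : ∀ m, Kfun (m + 1) =
      if hg : good (Kfun m) m then Function.update (Kfun m) m (hstep (Kfun m) m hg).choose
      else Kfun m := fun m => rfl
  have hgood0 : good (Kfun 0) 0 := by
    show c / 2 < ν (p '' D 0 (Kfun 0))
    have : D 0 (Kfun 0) = univ := by
      ext x; simp [hD]
    rw [this, image_univ, ← hc]
    exact hhalf
  have hgoodall : ∀ m, good (Kfun m) m := by
    intro m
    induction m with
    | zero => exact hgood0
    | succ m ih =>
      rw [hKsucc m, dif_pos ih]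
      exact (hstep (Kfun m) m ih).choose_spec
  have hagree : ∀ m' m, m ≤ m' → ∀ i, i < m → Kfun m' i = Kfun m i := by
    intro m'
    induction m' with
    | zero =>
      intro m hm i hi
      have : m = 0 := Nat.le_antisymm hm (Nat.zero_le m)
      rw [this]
    | succ m' ih =>
      intro m hm i hi
      rcases eq_or_lt_of_le hm with rfl | hlt
      · rfl
      · have hm' : m ≤ m' := by omega
        rw [hKsucc m']
        by_cases hg : good (Kfun m') m'
        · rw [dif_pos hg, Function.update_of_ne (by omega : i ≠ m')]
          exact ih m hm' i hi
        · rw [dif_neg hg]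
          exact ih m hm' i hi
  set k : ℕ → ℕ := fun m => Kfun (m + 1) m with hk
  have hDk : ∀ m, D m k = D m (Kfun m) := by
    intro m
    ext x
    simp only [hD, mem_setOf_eq]
    refine forall_congr' fun i => ?_
    refine imp_congr_right fun hi => ?_
    rw [hk]
    rw [hagree m (i + 1) (by omega) i (Nat.lt_succ_self i)]
  have hgoodk : ∀ m, c / 2 < ν (p '' D m k) := by
    intro m
    rw [hDk m]
    exact hgoodall m
  -- the compact set
  set KK : Set (ℕ → ℕ) := {x | ∀ i, x i ≤ k i} with hKK
  have hKKc : IsCompact KK := by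
    have : KK = Set.pi univ fun i => Set.Iic (k i) := by
      ext x; simp [hKK, Set.pi]
    rw [this]
    exact isCompact_univ_pi fun i => (Set.finite_Iic (k i)).isCompact
  -- intersection of closures is inside p '' KK
  have hclos : (⋂ m, closure (p '' D m k)) ⊆ p '' KK := by
    intro y hy
    obtain ⟨V, hVb⟩ := (𝓝 y).exists_antitone_basis
    have hxex : ∀ m, ∃ x, x ∈ D m k ∧ p x ∈ V m := by
      intro m
      have hym := mem_iInter.1 hy m
      have := mem_closure_iff_nhds.1 hym (V m) (hVb.mem m)
      rcases this with ⟨w, hwV, hwD⟩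
      rcases hwD with ⟨x, hx, rfl⟩
      exact ⟨x, hx, hwV⟩
    choose x hxD hxV using hxex
    set t : ℕ → ℕ → ℕ := fun m i => min (x m i) (k i) with ht
    have htK : ∀ m, t m ∈ KK := fun m i => min_le_right _ _
    obtain ⟨a, haK, ψ, hψ, hconv⟩ := hKKc.tendsto_subseq htK
    -- p (x (ψ j)) tends to p a
    have htend1 : Tendsto (fun j => p (x (ψ j))) atTop (𝓝 (p a)) := by
      rw [tendsto_nhds]
      intro U hU hpaU
      have hopen : IsOpen (p ⁻¹' U) := hU.preimage hp
      have haU : a ∈ p ⁻¹' U := hpaU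
      obtain ⟨v, ⟨x0, n, rfl⟩, hav, hsub⟩ :=
        (PiNat.isTopologicalBasis_cylinders (fun _ : ℕ => ℕ)).exists_subset_of_mem_open haU hopen
      -- eventually each coordinate < n agrees
      have hcoord : ∀ᶠ j in atTop, ∀ i ∈ Finset.range n, t (ψ j) i = a i := by
        rw [eventually_all_finset]
        intro i _
        have : Tendsto (fun j => t (ψ j) i) atTop (𝓝 (a i)) :=
          ((continuous_apply i).continuousAt.tendsto).comp hconv
        rw [nhds_discrete, tendsto_pure] at this
        exact this
      have hlarge : ∀ᶠ j in atTop, n ≤ ψ j := by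
        have := hψ.tendsto_atTop
        exact this.eventually_ge_atTop n
      filter_upwards [hcoord, hlarge] with j hj hnj
      apply hsub
      rw [PiNat.mem_cylinder_iff]
      intro i hi
      have h1 : t (ψ j) i = a i := hj i (Finset.mem_range.2 hi)
      have h2 : x (ψ j) i = t (ψ j) i := by
        have hxle : x (ψ j) i ≤ k i := hxD (ψ j) i (lt_of_lt_of_le hi hnj)
        simp [ht, min_eq_left hxle]
      have h3 : a i = x0 i := PiNat.mem_cylinder_iff.1 hav i hi
      rw [h2, h1, h3]
    have htend2 : Tendsto (fun j => p (x (ψ j))) atTop (𝓝 y) :=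
      (hVb.tendsto hxV).comp hψ.tendsto_atTop
    have := tendsto_nhds_unique htend2 htend1
    exact this ▸ ⟨a, haK, rfl⟩
  -- measure bound
  have hmeasKK : c / 2 ≤ ν (p '' KK) := by
    refine le_trans ?_ (measure_mono hclos)
    have hanti : Antitone fun m => closure (p '' D m k) := by
      intro m m' hm
      apply closure_mono
      apply image_mono
      intro x hx i hi
      exact hx i (lt_of_lt_of_le hi hm)
    rw [(hanti.directed_ge).measure_iInter
      (fun m => (isClosed_closure).nullMeasurableSet) ⟨0, measure_ne_top ν _⟩]
    exact le_iInf fun m => le_of_lt (lt_of_lt_of_le (hgoodk m) (measure_mono subset_closure))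
  have hpos2 : ν (p '' KK) ≠ 0 := by
    intro h0
    rw [h0] at hmeasKK
    exact (ENNReal.half_pos hc0).ne' (le_antisymm hmeasKK zero_le)
  -- selection
  obtain ⟨σ0, hσ0, hσ0spec⟩ := compact_selection hp hKKc
  refine ⟨p '' KK, ((hKKc.image hp).isClosed).measurableSet, hpos2, q ∘ σ0, hq.measurable.comp hσ0, ?_⟩
  intro z hz
  obtain ⟨hσK, hpσ⟩ := hσ0spec z hz
  have : h (σ0 z) ∈ S' := by rw [← hrange]; exact ⟨σ0 z, rfl⟩
  have heq : h (σ0 z) = (z, q (σ0 z)) := by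
    have : h (σ0 z) = (p (σ0 z), q (σ0 z)) := rfl
    rw [this, hpσ]
  rw [heq] at this
  exact this

/-- Proposition A.3: integral optimality is equivalent to a.s. pointwise optimality. -/
theorem stmt15 {Ω : Type*} {mΩ : MeasurableSpace Ω} (μ : Measure Ω) [IsProbabilityMeasure μ]
    (n : ℕ) (f : Ω → (Fin n → ℝ) → ℝ)
    (hf : Measurable fun p : Ω × (Fin n → ℝ) => f p.1 p.2)
    (G : Ω → Set (Fin n → ℝ)) (hGne : ∀ ω, (G ω).Nonempty) (hGc : ∀ ω, IsClosed (G ω))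
    (hGmeas : ∀ x : Fin n → ℝ, Measurable fun ω => Metric.infDist x (G ω))
    (K : Ω → ℝ) (hKi : Integrable K μ)
    (hbound : ∀ ω, ∀ x ∈ G ω, |f ω x| ≤ K ω)
    (ξbar : Ω → Fin n → ℝ) (hξbarm : Measurable ξbar) (hξbarG : ∀ᵐ ω ∂μ, ξbar ω ∈ G ω) :
    (∀ ξ : Ω → Fin n → ℝ, Measurable ξ → (∀ᵐ ω ∂μ, ξ ω ∈ G ω) →
        ∫ ω, f ω (ξ ω) ∂μ ≤ ∫ ω, f ω (ξbar ω) ∂μ)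
    ↔ (∀ᵐ ω ∂μ, IsMaxOn (f ω) (G ω) (ξbar ω)) := by
  classical
  -- generically useful facts
  have hfmeas_comp : ∀ (ξ : Ω → Fin n → ℝ), Measurable ξ → Measurable fun ω => f ω (ξ ω) :=
    fun ξ hξ => hf.comp (measurable_id.prodMk hξ)
  have hInt : ∀ (ξ : Ω → Fin n → ℝ), Measurable ξ → (∀ᵐ ω ∂μ, ξ ω ∈ G ω) →
      Integrable (fun ω => f ω (ξ ω)) μ := by
    intro ξ hξ hξG
    refine Integrable.mono' hKi ((hfmeas_comp ξ hξ).aestronglyMeasurable) ?_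
    filter_upwards [hξG] with ω hω
    exact hbound ω (ξ ω) hω
  constructor
  · -- hard direction
    intro hopt
    by_contra hbad
    -- the bad set
    set S : Set (Ω × (Fin n → ℝ)) :=
      {q | q.2 ∈ G q.1 ∧ f q.1 (ξbar q.1) < f q.1 q.2} with hSdef
    have hdist : Measurable fun q : Ω × (Fin n → ℝ) => Metric.infDist q.2 (G q.1) := by
      have h1 : Measurable (Function.uncurry fun (x : Fin n → ℝ) (ω : Ω) =>
          Metric.infDist x (G ω)) := by
        apply measurable_uncurry_of_continuous_of_measurable
        · intro ω
          exact Metric.continuous_infDist_pt (G ω)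
        · intro x
          exact hGmeas x
      have : (fun q : Ω × (Fin n → ℝ) => Metric.infDist q.2 (G q.1)) =
          (Function.uncurry fun (x : Fin n → ℝ) (ω : Ω) => Metric.infDist x (G ω)) ∘ Prod.swap :=
        rfl
      rw [this]
      exact h1.comp measurable_swap
    have hSmeas : MeasurableSet S := by
      have h1 : MeasurableSet {q : Ω × (Fin n → ℝ) | q.2 ∈ G q.1} := by
        have : {q : Ω × (Fin n → ℝ) | q.2 ∈ G q.1} =
            {q : Ω × (Fin n → ℝ) | Metric.infDist q.2 (G q.1) = 0} := by
          ext q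
          exact (hGc q.1).mem_iff_infDist_zero (hGne q.1)
        rw [this]
        exact hdist (MeasurableSet.singleton 0)
      have h2 : MeasurableSet {q : Ω × (Fin n → ℝ) | f q.1 (ξbar q.1) < f q.1 q.2} := by
        apply measurableSet_lt
        · exact hf.comp ((measurable_fst).prodMk (hξbarm.comp measurable_fst))
        · exact hf
      exact h1.inter h2
    -- bad set has positive outer measure and is inside the projection of S
    have hproj : {ω | ¬ IsMaxOn (f ω) (G ω) (ξbar ω)} ⊆ Prod.fst '' S := by
      intro ω hω
      simp only [IsMaxOn, IsMaxFilter, mem_setOf_eq] at hω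
      rw [Filter.eventually_principal] at hω
      push_neg at hω
      rcases hω with ⟨x, hxG, hxf⟩
      exact ⟨(ω, x), ⟨hxG, hxf⟩, rfl⟩
    have hposS : μ (Prod.fst '' S) ≠ 0 := by
      intro h0
      exact hbad (measure_mono_null hproj h0)
    -- factorization through Baire space
    obtain ⟨φ, hφ, S', hS', hSeq⟩ := factor_lemma hSmeas
    set ν : Measure (ℕ → ℕ) := μ.map φ with hν
    haveI : IsFiniteMeasure ν := by
      rw [hν]
      exact Measure.isFiniteMeasure_map μ φ
    have hpos' : ν (Prod.fst '' S') ≠ 0 := by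
      intro h0
      apply hposS
      have hsub : Prod.fst '' S ⊆ φ ⁻¹' (Prod.fst '' S') := by
        rintro ω ⟨⟨ω', x⟩, hqS, rfl⟩
        rw [hSeq] at hqS
        exact ⟨(φ ω', x), hqS, rfl⟩
      refine measure_mono_null hsub ?_
      have := Measure.le_map_apply (hφ.aemeasurable : AEMeasurable φ μ) (Prod.fst '' S')
      rw [← hν] at this
      exact le_antisymm (le_trans this (le_of_eq h0)) zero_le
    -- measurable selection
    obtain ⟨B, hB, hBpos, σ, hσ, hσspec⟩ := vonNeumann_selection ν hS' hpos'
    -- the better strategy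
    set ξ : Ω → Fin n → ℝ := fun ω => if φ ω ∈ B then σ (φ ω) else ξbar ω with hξdef
    have hφB : MeasurableSet (φ ⁻¹' B) := hφ hB
    have hξm : Measurable ξ := Measurable.ite hφB (hσ.comp hφ) hξbarm
    have hS_of_mem : ∀ ω, φ ω ∈ B → (ω, ξ ω) ∈ S := by
      intro ω hω
      have : (φ ω, σ (φ ω)) ∈ S' := hσspec _ hω
      have h2 : (ω, σ (φ ω)) ∈ S := by
        rw [hSeq]
        exact this
      simpa [hξdef, if_pos hω] using h2
    have hξG : ∀ᵐ ω ∂μ, ξ ω ∈ G ω := by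
      filter_upwards [hξbarG] with ω hω
      by_cases h : φ ω ∈ B
      · exact (hS_of_mem ω h).1
      · simp only [hξdef, if_neg h]
        exact hω
    have hge : ∀ᵐ ω ∂μ, f ω (ξbar ω) ≤ f ω (ξ ω) := by
      apply Eventually.of_forall
      intro ω
      by_cases h : φ ω ∈ B
      · exact le_of_lt (hS_of_mem ω h).2
      · simp [hξdef, if_neg h]
    have hIξ : Integrable (fun ω => f ω (ξ ω)) μ := hInt ξ hξm hξG
    have hIξbar : Integrable (fun ω => f ω (ξbar ω)) μ := hInt ξbar hξbarm hξbarG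
    -- strict inequality of integrals
    have hg0 : ∀ᵐ ω ∂μ, 0 ≤ f ω (ξ ω) - f ω (ξbar ω) := by
      filter_upwards [hge] with ω hω
      linarith
    have hgint : Integrable (fun ω => f ω (ξ ω) - f ω (ξbar ω)) μ := hIξ.sub hIξbar
    have hle0 : ∫ ω, (f ω (ξ ω) - f ω (ξbar ω)) ∂μ ≤ 0 := by
      rw [integral_sub hIξ hIξbar]
      have := hopt ξ hξm hξG
      linarith
    have hzero : ∫ ω, (f ω (ξ ω) - f ω (ξbar ω)) ∂μ = 0 :=
      le_antisymm hle0 (integral_nonneg_of_ae hg0)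
    have hae0 : (fun ω => f ω (ξ ω) - f ω (ξbar ω)) =ᵐ[μ] 0 :=
      (integral_eq_zero_iff_of_nonneg_ae hg0 hgint).1 hzero
    -- but the difference is positive on φ⁻¹ B, which has positive measure
    have hμB : μ (φ ⁻¹' B) ≠ 0 := by
      rw [hν] at hBpos
      rw [Measure.map_apply hφ hB] at hBpos
      exact hBpos
    have hsubB : φ ⁻¹' B ⊆ {ω | ¬ (f ω (ξ ω) - f ω (ξbar ω) = 0)} := by
      intro ω hω
      have := (hS_of_mem ω hω).2
      simp only [mem_setOf_eq]
      intro heq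
      rw [sub_eq_zero] at heq
      rw [heq] at this
      exact lt_irrefl _ this
    have : μ {ω | ¬ (f ω (ξ ω) - f ω (ξbar ω) = 0)} = 0 := by
      have := hae0
      rw [Filter.EventuallyEq, ae_iff] at this
      simpa using this
    exact hμB (measure_mono_null hsubB this)
  · -- easy direction
    intro hmax ξ hξm hξG
    apply integral_mono_ae (hInt ξ hξm hξG) (hInt ξbar hξbarm hξbarG)
    filter_upwards [hmax, hξG] with ω h1 h2
    exact h1 h2
end
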